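/- Let d ≥ 1 be an integer, δ > 0 and k ∈ {0,1,2}. For x ∈ ℝ^d, set c(x) = e^{−δ/2 − |x|²/4}, U_k(x) = 2 cos(arccos(c(x)) + 2kπ/3), Q(x) = 4 e^{−3δ/2 − 3|x|²/4} − 3 e^{−δ/2 − |x|²/4}, and define u_k : ℝ × ℝ^d → ℂ by u_k(t,x) = U_k(x) e^{−3it}. Then for every (t,x), the map t ↦ u_k(t,x) is differentiable and i ∂_t u_k(t,x) = |u_k(t,x)|² u_k(t,x) − 2 Q(x) e^{−3it}; that is, u_k solves the forced cubic equation i ∂_t u = |u|² u − f with f(t,x) = 2Q(x) e^{−3it} and no Laplacian term (ε = 0). -/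

import Mathlib

/-- The profile `U_k(x) = 2 cos(arccos(e^{-δ/2-|x|²/4}) + 2kπ/3)`. -/
noncomputable def Uk (d : ℕ) (δ : ℝ) (k : ℕ) (x : EuclideanSpace ℝ (Fin d)) : ℝ :=
  2 * Real.cos (Real.arccos (Real.exp (-δ / 2 - ‖x‖ ^ 2 / 4)) + 2 * k * Real.pi / 3)

/-- The forcing profile `Q(x) = 4 e^{-3δ/2-3|x|²/4} - 3 e^{-δ/2-|x|²/4}`. -/
noncomputable def Qprof (d : ℕ) (δ : ℝ) (x : EuclideanSpace ℝ (Fin d)) : ℝ :=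
  4 * Real.exp (-3 * δ / 2 - 3 * ‖x‖ ^ 2 / 4) - 3 * Real.exp (-δ / 2 - ‖x‖ ^ 2 / 4)

/-- `u_k(t,x) = U_k(x) e^{-3it}`. -/
noncomputable def uk (d : ℕ) (δ : ℝ) (k : ℕ) (t : ℝ) (x : EuclideanSpace ℝ (Fin d)) : ℂ :=
  (Uk d δ k x : ℂ) * Complex.exp (-3 * Complex.I * (t : ℂ))

/-! The three values `2 cos(θ + 2kπ/3)` are the roots of `X³ - 3X - 2 cos 3θ` (triple-angle
formula); with `cos θ = e^{-δ/2-|x|²/4}` the constant term is `2Q(x)`, so `U_k³ = 3U_k + 2Q`.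
For the standing wave `u = U e^{-3it}` one has `i ∂_t u = 3u` and `|u|² u = U³ e^{-3it}`, and the
equation follows. -/

namespace Real

theorem two_cos_add_nat_mul_two_pi_div_three_pow_three (θ : ℝ) (k : ℕ) :
    (2 * cos (θ + 2 * k * π / 3)) ^ 3 = 3 * (2 * cos (θ + 2 * k * π / 3)) + 2 * cos (3 * θ) := by
  have h3 : cos (3 * (θ + 2 * k * π / 3)) = cos (3 * θ) := by
    rw [show 3 * (θ + 2 * k * π / 3) = 3 * θ + k * (2 * π) by ring, cos_add_nat_mul_two_pi]
  linear_combination 2 * h3 - 2 * cos_three_mul (θ + 2 * k * π / 3)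

theorem cos_three_mul_arccos {c : ℝ} (h₁ : -1 ≤ c) (h₂ : c ≤ 1) :
    cos (3 * arccos c) = 4 * c ^ 3 - 3 * c := by
  rw [cos_three_mul, cos_arccos h₁ h₂]

end Real

open Real in
theorem Qprof_eq_cos_three_mul_arccos (d : ℕ) (δ : ℝ) (hδ : 0 ≤ δ) (x : EuclideanSpace ℝ (Fin d)) :
    Qprof d δ x = cos (3 * arccos (exp (-δ / 2 - ‖x‖ ^ 2 / 4))) := by
  have hle : exp (-δ / 2 - ‖x‖ ^ 2 / 4) ≤ 1 := exp_le_one_iff.mpr (by nlinarith [sq_nonneg ‖x‖])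
  rw [cos_three_mul_arccos (by linarith [exp_pos (-δ / 2 - ‖x‖ ^ 2 / 4)]) hle, Qprof,
    ← exp_nat_mul]
  ring_nf

theorem Uk_pow_three (d : ℕ) (δ : ℝ) (hδ : 0 ≤ δ) (k : ℕ) (x : EuclideanSpace ℝ (Fin d)) :
    Uk d δ k x ^ 3 = 3 * Uk d δ k x + 2 * Qprof d δ x := by
  rw [Qprof_eq_cos_three_mul_arccos d δ hδ x]
  exact Real.two_cos_add_nat_mul_two_pi_div_three_pow_three _ k

namespace Complex

theorem hasDerivAt_mul_exp_neg_mul_I_mul (A ω : ℂ) (t : ℝ) :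
    HasDerivAt (fun s : ℝ => A * exp (-ω * I * s)) (A * exp (-ω * I * t) * (-ω * I)) t := by
  have hlin : HasDerivAt (fun s : ℝ => -ω * I * (s : ℂ)) (-ω * I) t := by
    simpa using ((hasDerivAt_id t).ofReal_comp).const_mul (-ω * I)
  simpa [mul_assoc] using hlin.cexp.const_mul A

theorem norm_ofReal_mul_exp_neg_mul_I_mul (U ω t : ℝ) :
    ‖(U : ℂ) * exp (-ω * I * t)‖ = |U| := by
  rw [norm_mul, norm_real, Real.norm_eq_abs, show -(ω : ℂ) * I * t = ((-ω * t : ℝ) : ℂ) * I by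
    push_cast; ring, norm_exp_ofReal_mul_I, mul_one]

end Complex

theorem stmt_14_general (d : ℕ) (δ : ℝ) (hδ : 0 < δ) (k : ℕ)
    (t : ℝ) (x : EuclideanSpace ℝ (Fin d)) :
    DifferentiableAt ℝ (fun s : ℝ => uk d δ k s x) t ∧
    Complex.I * deriv (fun s : ℝ => uk d δ k s x) t =
      ((‖uk d δ k t x‖ : ℂ)) ^ 2 * uk d δ k t x -
        2 * (Qprof d δ x : ℂ) * Complex.exp (-3 * Complex.I * (t : ℂ)) := by
  have hderiv : HasDerivAt (fun s : ℝ => uk d δ k s x) _ t :=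
    Complex.hasDerivAt_mul_exp_neg_mul_I_mul (Uk d δ k x) 3 t
  refine ⟨hderiv.differentiableAt, ?_⟩
  have hnorm : ‖uk d δ k t x‖ = |Uk d δ k x| := by
    rw [uk]; exact_mod_cast Complex.norm_ofReal_mul_exp_neg_mul_I_mul (Uk d δ k x) 3 t
  have hcube : (Uk d δ k x : ℂ) ^ 3 = 3 * Uk d δ k x + 2 * Qprof d δ x := by
    exact_mod_cast Uk_pow_three d δ hδ.le k x
  rw [hderiv.deriv, hnorm, ← Complex.ofReal_pow, sq_abs, uk, Complex.ofReal_pow]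
  linear_combination (-Complex.exp (-3 * Complex.I * t)) * hcube
    - 3 * Uk d δ k x * Complex.exp (-3 * Complex.I * t) * Complex.I_sq

theorem stmt_14 (d : ℕ) (hd : 1 ≤ d) (δ : ℝ) (hδ : 0 < δ) (k : ℕ) (hk : k ≤ 2)
    (t : ℝ) (x : EuclideanSpace ℝ (Fin d)) :
    DifferentiableAt ℝ (fun s : ℝ => uk d δ k s x) t ∧
    Complex.I * deriv (fun s : ℝ => uk d δ k s x) t =
      ((‖uk d δ k t x‖ : ℂ)) ^ 2 * uk d δ k t x -
        2 * (Qprof d δ x : ℂ) * Complex.exp (-3 * Complex.I * (t : ℂ)) :=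
  stmt_14_general d δ hδ k t x
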